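/- Let (P,w) be a normalized weighted set of n points in R^d, ε ∈ (0,1), and suppose u ∈ [0,∞)^n satisfies: u' defined by u'_i = u_i‖(p_i,1)‖²/2 is a distribution vector, and ‖Σ_i (w'_i − u'_i) p'_i‖ ≤ ε/4 where p'_i = (p_i,1)/‖(p_i,1)‖², w'_i = w_i‖(p_i,1)‖²/2. Then for every x ∈ R^d, |Σ_i (w_i − u_i)‖p_i − x‖²| ≤ ε Σ_i w_i ‖p_i − x‖². -/

import Mathlib

open scoped RealInnerProductSpace

/-!
Lift each point `p` to `(p, 1)`. The squared distance `‖p - x‖²` is the affine function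
`‖(p, 1)‖² + ⟪(p, 1), (-2x, ‖x‖² - 1)⟫` of the lift, and the dual vector `(-2x, ‖x‖² - 1)` has
norm exactly `1 + ‖x‖²`, which is also the cost `∑ wᵢ ‖pᵢ - x‖²` of a normalized set.
With `v = w - u`, the lifted mass `∑ vᵢ ‖(pᵢ, 1)‖²` vanishes because `w'` and `u'` are both
distributions, so `∑ vᵢ ‖pᵢ - x‖² = ⟪∑ vᵢ (pᵢ, 1), (-2x, ‖x‖² - 1)⟫`, and Cauchy–Schwarz with
`∑ vᵢ (pᵢ, 1) = 2 ∑ (w'ᵢ - u'ᵢ) p'ᵢ` bounds it by `(ε / 2) (1 + ‖x‖²)`.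
-/

section

variable {ι : Type*} (s : Finset ι)

theorem norm_toLp_one_sq {E : Type*} [SeminormedAddCommGroup E] (p : E) :
    ‖WithLp.toLp 2 (p, (1 : ℝ))‖ ^ 2 = ‖p‖ ^ 2 + 1 := by
  simp [WithLp.prod_norm_sq_eq_of_L2]

theorem sum_mul_norm_toLp_one_sq_of_normalized {E : Type*} [SeminormedAddCommGroup E]
    {p : ι → E} {w : ι → ℝ} (hw1 : ∑ i ∈ s, w i = 1) (hw3 : ∑ i ∈ s, w i * ‖p i‖ ^ 2 = 1) :
    ∑ i ∈ s, w i * ‖WithLp.toLp 2 (p i, (1 : ℝ))‖ ^ 2 = 2 := by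
  simp only [norm_toLp_one_sq, mul_add, mul_one, Finset.sum_add_distrib, hw1, hw3]
  norm_num

theorem sum_smul_toLp_one {V : Type*} [AddCommGroup V] [Module ℝ V] (p : ι → V) (v : ι → ℝ) :
    ∑ i ∈ s, v i • WithLp.toLp 2 (p i, (1 : ℝ)) =
      WithLp.toLp 2 (∑ i ∈ s, v i • p i, ∑ i ∈ s, v i) := by
  apply (WithLp.equiv 2 _).injective
  ext <;> simp [Prod.fst_sum, Prod.snd_sum]

section InnerProductSpace

variable {E : Type*} [NormedAddCommGroup E] [InnerProductSpace ℝ E]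

noncomputable def queryLift (x : E) : WithLp 2 (E × ℝ) :=
  WithLp.toLp 2 (-(2 : ℝ) • x, ‖x‖ ^ 2 - 1)

theorem norm_queryLift (x : E) : ‖queryLift x‖ = 1 + ‖x‖ ^ 2 := by
  have hsq : ‖queryLift x‖ ^ 2 = (1 + ‖x‖ ^ 2) ^ 2 := by
    simp only [queryLift, WithLp.prod_norm_sq_eq_of_L2, WithLp.toLp_fst, WithLp.toLp_snd,
      norm_smul, Real.norm_eq_abs, sq_abs]
    norm_num
    ring
  exact (sq_eq_sq₀ (norm_nonneg _) (by positivity)).mp hsq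

theorem norm_sub_sq_eq_norm_toLp_one_sq_add_inner (p x : E) :
    ‖p - x‖ ^ 2 = ‖WithLp.toLp 2 (p, (1 : ℝ))‖ ^ 2 + ⟪WithLp.toLp 2 (p, (1 : ℝ)), queryLift x⟫ := by
  simp only [norm_toLp_one_sq, queryLift, WithLp.prod_inner_apply, inner_smul_right,
    norm_sub_sq_real, neg_mul, RCLike.inner_apply, Real.ringHom_apply, mul_one]
  ring

variable (p : ι → E)

theorem sum_mul_norm_sub_sq_eq (v : ι → ℝ) (x : E) :
    ∑ i ∈ s, v i * ‖p i - x‖ ^ 2 = ∑ i ∈ s, v i * ‖WithLp.toLp 2 (p i, (1 : ℝ))‖ ^ 2 +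
      ⟪∑ i ∈ s, v i • WithLp.toLp 2 (p i, (1 : ℝ)), queryLift x⟫ := by
  simp only [norm_sub_sq_eq_norm_toLp_one_sq_add_inner, mul_add, Finset.sum_add_distrib,
    sum_inner, real_inner_smul_left]

theorem abs_sum_mul_norm_sub_sq_le {v : ι → ℝ}
    (hmass : ∑ i ∈ s, v i * ‖WithLp.toLp 2 (p i, (1 : ℝ))‖ ^ 2 = 0) (x : E) :
    |∑ i ∈ s, v i * ‖p i - x‖ ^ 2| ≤
      ‖∑ i ∈ s, v i • WithLp.toLp 2 (p i, (1 : ℝ))‖ * (1 + ‖x‖ ^ 2) := by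
  rw [sum_mul_norm_sub_sq_eq, hmass, zero_add, ← norm_queryLift x]
  exact abs_real_inner_le_norm _ _

theorem sum_mul_norm_sub_sq_of_normalized {w : ι → ℝ} (hw1 : ∑ i ∈ s, w i = 1)
    (hw2 : ∑ i ∈ s, w i • p i = 0) (hw3 : ∑ i ∈ s, w i * ‖p i‖ ^ 2 = 1) (x : E) :
    ∑ i ∈ s, w i * ‖p i - x‖ ^ 2 = 1 + ‖x‖ ^ 2 := by
  rw [sum_mul_norm_sub_sq_eq, sum_mul_norm_toLp_one_sq_of_normalized _ hw1 hw3, sum_smul_toLp_one,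
    hw1, hw2]
  simp only [queryLift, WithLp.prod_inner_apply, inner_zero_left, RCLike.inner_apply,
    Real.ringHom_apply, zero_add]
  ring

end InnerProductSpace

end

theorem stmt9_general {d n : ℕ} (p : Fin n → EuclideanSpace ℝ (Fin d)) (w u u' : Fin n → ℝ)
    (hw1 : ∑ i, w i = 1) (hw2 : ∑ i, w i • p i = 0) (hw3 : ∑ i, w i * ‖p i‖ ^ 2 = 1)
    (ε : ℝ)
    (lift : Fin n → WithLp 2 (EuclideanSpace ℝ (Fin d) × ℝ))
    (hlift : ∀ i, lift i = (WithLp.equiv 2 (EuclideanSpace ℝ (Fin d) × ℝ)).symm (p i, 1))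
    (p' : Fin n → WithLp 2 (EuclideanSpace ℝ (Fin d) × ℝ))
    (hp' : ∀ i, p' i = (‖lift i‖ ^ 2)⁻¹ • lift i)
    (w' : Fin n → ℝ) (hw' : ∀ i, w' i = w i * ‖lift i‖ ^ 2 / 2)
    (hu' : ∀ i, u' i = u i * ‖lift i‖ ^ 2 / 2)
    (hu'dist : ∑ i, u' i = 1)
    (hclose : ‖∑ i, (w' i - u' i) • p' i‖ ≤ ε / 4) :
    ∀ x : EuclideanSpace ℝ (Fin d),
      |∑ i, (w i - u i) * ‖p i - x‖ ^ 2| ≤ ε * ∑ i, w i * ‖p i - x‖ ^ 2 := by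
  intro x
  have hlift' : ∀ i, lift i = WithLp.toLp 2 (p i, 1) := hlift
  have hlifted : ∑ i, (w i - u i) • lift i = (2 : ℝ) • ∑ i, (w' i - u' i) • p' i := by
    rw [Finset.smul_sum]
    refine Finset.sum_congr rfl fun i _ => ?_
    have hne : ‖lift i‖ ≠ 0 := by
      rw [← pow_ne_zero_iff two_ne_zero, hlift', norm_toLp_one_sq]; positivity
    rw [hp', hw', hu', smul_smul, smul_smul]
    congr 1
    field_simp
  have hmass : ∑ i, (w i - u i) * ‖lift i‖ ^ 2 = 0 := by
    have hu2 : ∑ i, u i * ‖lift i‖ ^ 2 = 2 := by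
      simp only [hu', ← Finset.sum_div] at hu'dist
      linarith
    simp only [sub_mul, Finset.sum_sub_distrib, hu2]
    simp only [hlift', sum_mul_norm_toLp_one_sq_of_normalized _ hw1 hw3, sub_self]
  simp only [hlift'] at hlifted hmass
  have hε : 0 ≤ ε := by linarith [norm_nonneg (∑ i, (w' i - u' i) • p' i)]
  calc |∑ i, (w i - u i) * ‖p i - x‖ ^ 2|
      ≤ ‖∑ i, (w i - u i) • WithLp.toLp 2 (p i, (1 : ℝ))‖ * (1 + ‖x‖ ^ 2) :=
        abs_sum_mul_norm_sub_sq_le _ p hmass x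
    _ = 2 * ‖∑ i, (w' i - u' i) • p' i‖ * (1 + ‖x‖ ^ 2) := by
        rw [hlifted, norm_smul, Real.norm_two]
    _ ≤ 2 * (ε / 4) * (1 + ‖x‖ ^ 2) := by gcongr
    _ ≤ ε * (1 + ‖x‖ ^ 2) := by gcongr; linarith
    _ = ε * ∑ i, w i * ‖p i - x‖ ^ 2 := by
        rw [sum_mul_norm_sub_sq_of_normalized _ p hw1 hw2 hw3]

theorem stmt9 {d n : ℕ} (p : Fin n → EuclideanSpace ℝ (Fin d)) (w u u' : Fin n → ℝ)
    (hw1 : ∑ i, w i = 1) (hw2 : ∑ i, w i • p i = 0) (hw3 : ∑ i, w i * ‖p i‖ ^ 2 = 1)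
    (ε : ℝ) (hε : ε ∈ Set.Ioo (0 : ℝ) 1)
    (hu0 : ∀ i, 0 ≤ u i)
    (lift : Fin n → WithLp 2 (EuclideanSpace ℝ (Fin d) × ℝ))
    (hlift : ∀ i, lift i = (WithLp.equiv 2 (EuclideanSpace ℝ (Fin d) × ℝ)).symm (p i, 1))
    (p' : Fin n → WithLp 2 (EuclideanSpace ℝ (Fin d) × ℝ))
    (hp' : ∀ i, p' i = (‖lift i‖ ^ 2)⁻¹ • lift i)
    (w' : Fin n → ℝ) (hw' : ∀ i, w' i = w i * ‖lift i‖ ^ 2 / 2)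
    (hu' : ∀ i, u' i = u i * ‖lift i‖ ^ 2 / 2)
    (hu'dist : ∑ i, u' i = 1)
    (hclose : ‖∑ i, (w' i - u' i) • p' i‖ ≤ ε / 4) :
    ∀ x : EuclideanSpace ℝ (Fin d),
      |∑ i, (w i - u i) * ‖p i - x‖ ^ 2| ≤ ε * ∑ i, w i * ‖p i - x‖ ^ 2 :=
  stmt9_general p w u u' hw1 hw2 hw3 ε lift hlift p' hp' w' hw' hu' hu'dist hclose
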